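/- Under the same hypotheses (dω = 0, β = δ and ∂β = 0 at the point, J = ω as matrices at the point, J² = -1 identically), for any fixed index l and any vector v one has (∂_l J_j^m) v^j (ω v)_m = 0, i.e. the bilinear expression ⟨(∂_l J)v, ωv⟩ vanishes. -/

import Mathlib

/-!
Differentiating `J β = ω` at the base point, where `β = 1` and `∂_l β = 0`, gives `∂_l J = ∂_l ω =: D`
there, and differentiating `J² = -1` gives `D ω + ω D = 0`. As `D` and `ω` are antisymmetric, so is
`D ω = -(D ω)ᵀ`, and the quadratic form `v ↦ ⟨D ω v, v⟩` of an antisymmetric matrix vanishes.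
-/

open Matrix

/-- Partial derivative of a scalar field on `ℝ^N` in the `l`-th coordinate direction. -/
noncomputable def pder {N : ℕ} (l : Fin N) (f : (Fin N → ℝ) → ℝ) (x : Fin N → ℝ) : ℝ :=
  fderiv ℝ f x (Pi.single l 1)

section
variable {N : ℕ} (l : Fin N) {x : Fin N → ℝ}

theorem pder_mul {f g : (Fin N → ℝ) → ℝ} (hf : DifferentiableAt ℝ f x)
    (hg : DifferentiableAt ℝ g x) :
    pder l (fun y => f y * g y) x = pder l f x * g x + f x * pder l g x := by
  simp only [pder, fderiv_fun_mul hf hg, _root_.add_apply, _root_.smul_apply, smul_eq_mul]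
  ring

theorem pder_sum {ι : Type*} {s : Finset ι} {f : ι → (Fin N → ℝ) → ℝ}
    (hf : ∀ i ∈ s, DifferentiableAt ℝ (f i) x) :
    pder l (fun y => ∑ i ∈ s, f i y) x = ∑ i ∈ s, pder l (f i) x := by
  simp only [pder, fderiv_fun_sum hf, _root_.sum_apply]

theorem Filter.EventuallyEq.pder_eq {f g : (Fin N → ℝ) → ℝ} (h : f =ᶠ[nhds x] g) :
    pder l f x = pder l g x := by
  simp only [pder, h.fderiv_eq]

variable {m p q : Type*}

noncomputable def pderMatrix (A : (Fin N → ℝ) → Matrix m p ℝ) (x : Fin N → ℝ) : Matrix m p ℝ :=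
  of fun i j => pder l (fun y => A y i j) x

theorem pderMatrix_const (C : Matrix m p ℝ) : pderMatrix l (fun _ => C) x = 0 := by
  ext i j
  simp [pderMatrix, pder]

theorem pderMatrix_neg (A : (Fin N → ℝ) → Matrix m p ℝ) :
    pderMatrix l (fun y => -A y) x = -pderMatrix l A x := by
  ext i j
  simp [pderMatrix, pder, fderiv_fun_neg]

theorem pderMatrix_transpose (A : (Fin N → ℝ) → Matrix m p ℝ) :
    pderMatrix l (fun y => (A y)ᵀ) x = (pderMatrix l A x)ᵀ :=
  rfl

theorem pderMatrix_congr_of_eventuallyEq {A B : (Fin N → ℝ) → Matrix m p ℝ}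
    (h : A =ᶠ[nhds x] B) : pderMatrix l A x = pderMatrix l B x := by
  ext i j
  have hij : (fun y => A y i j) =ᶠ[nhds x] fun y => B y i j :=
    h.mono fun y hy => congrFun (congrFun hy i) j
  exact hij.pder_eq l

theorem pderMatrix_mul [Fintype q] {A : (Fin N → ℝ) → Matrix m q ℝ}
    {B : (Fin N → ℝ) → Matrix q p ℝ} (hA : ∀ i j, DifferentiableAt ℝ (fun y => A y i j) x)
    (hB : ∀ i j, DifferentiableAt ℝ (fun y => B y i j) x) :
    pderMatrix l (fun y => A y * B y) x = pderMatrix l A x * B x + A x * pderMatrix l B x := by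
  ext i j
  simp only [pderMatrix, mul_apply, of_apply, Matrix.add_apply]
  rw [pder_sum l fun k _ => (hA i k).fun_mul (hB k j), ← Finset.sum_add_distrib]
  exact Finset.sum_congr rfl fun k _ => pder_mul l (hA i k) (hB k j)

theorem pderMatrix_eq_of_eventually_mul_eq [Fintype q] [DecidableEq q]
    {A C : (Fin N → ℝ) → Matrix m q ℝ} {B : (Fin N → ℝ) → Matrix q q ℝ}
    (hA : ∀ i j, DifferentiableAt ℝ (fun y => A y i j) x)
    (hB : ∀ i j, DifferentiableAt ℝ (fun y => B y i j) x)
    (hmul : (fun y => A y * B y) =ᶠ[nhds x] C) (hBx : B x = 1) (hdB : pderMatrix l B x = 0) :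
    pderMatrix l A x = pderMatrix l C x := by
  rw [← pderMatrix_congr_of_eventuallyEq l hmul, pderMatrix_mul l hA hB, hBx, hdB,
    Matrix.mul_one, Matrix.mul_zero, add_zero]

end

section
variable {𝕜 E : Type*} [NontriviallyNormedField 𝕜] [NormedAddCommGroup E] [NormedSpace 𝕜 E]
  {n : Type*} [Fintype n] {x : E}

theorem differentiableAt_mul_apply {m p : Type*} {A : E → Matrix m n 𝕜} {B : E → Matrix n p 𝕜}
    (hA : ∀ i j, DifferentiableAt 𝕜 (fun y => A y i j) x)
    (hB : ∀ i j, DifferentiableAt 𝕜 (fun y => B y i j) x) (i : m) (j : p) :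
    DifferentiableAt 𝕜 (fun y => (A y * B y) i j) x := by
  simp only [mul_apply]
  fun_prop

variable [DecidableEq n]

theorem differentiableAt_det {A : E → Matrix n n 𝕜}
    (hA : ∀ i j, DifferentiableAt 𝕜 (fun y => A y i j) x) :
    DifferentiableAt 𝕜 (fun y => (A y).det) x := by
  simp only [det_apply']
  fun_prop

theorem differentiableAt_adjugate_apply {A : E → Matrix n n 𝕜}
    (hA : ∀ i j, DifferentiableAt 𝕜 (fun y => A y i j) x) (i j : n) :
    DifferentiableAt 𝕜 (fun y => (A y).adjugate i j) x := by
  simp only [adjugate_apply]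
  refine differentiableAt_det fun a b => ?_
  by_cases hab : a = j
  · simp [hab]
  · simpa [hab] using hA a b

theorem differentiableAt_inv_apply {A : E → Matrix n n 𝕜}
    (hA : ∀ i j, DifferentiableAt 𝕜 (fun y => A y i j) x) (hdet : (A x).det ≠ 0) (i j : n) :
    DifferentiableAt 𝕜 (fun y => (A y)⁻¹ i j) x := by
  simp only [inv_def, Matrix.smul_apply, Ring.inverse_eq_inv', smul_eq_mul]
  exact ((differentiableAt_det hA).inv hdet).mul (differentiableAt_adjugate_apply hA i j)

end

section
variable {R n : Type*} [CommRing R] [Fintype n]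

theorem dotProduct_mulVec_self_eq_zero [IsAddTorsionFree R] {A : Matrix n n R} (hA : Aᵀ = -A)
    (v : n → R) : v ⬝ᵥ A *ᵥ v = 0 := by
  rw [← self_eq_neg]
  calc v ⬝ᵥ A *ᵥ v = v ⬝ᵥ Aᵀ *ᵥ v := by rw [dotProduct_mulVec, ← mulVec_transpose, dotProduct_comm]
    _ = -(v ⬝ᵥ A *ᵥ v) := by rw [hA, neg_mulVec, dotProduct_neg]

theorem transpose_mul_eq_neg_of_anticommute {D W : Matrix n n R} (hD : Dᵀ = -D) (hW : Wᵀ = -W)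
    (hDW : D * W + W * D = 0) : (D * W)ᵀ = -(D * W) := by
  rw [transpose_mul, hD, hW, neg_mul_neg, eq_neg_of_add_eq_zero_right hDW]

theorem dotProduct_mul_mulVec_eq_sum (A B : Matrix n n R) (v : n → R) :
    v ⬝ᵥ (A * B) *ᵥ v = ∑ j, ∑ m, A j m * v j * (B *ᵥ v) m := by
  rw [← mulVec_mulVec]
  simp only [dotProduct, mulVec, Finset.mul_sum]
  refine Finset.sum_congr rfl fun j _ => Finset.sum_congr rfl fun m _ => ?_
  exact Finset.sum_congr rfl fun s _ => by ring

end

theorem stmt_4_general (n : ℕ) (x₀ : Fin (2 * n) → ℝ)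
    (om β J : (Fin (2 * n) → ℝ) → Matrix (Fin (2 * n)) (Fin (2 * n)) ℝ)
    (homdiff : ∀ i j, Differentiable ℝ (fun x => om x i j))
    (hβdiff : ∀ i j, Differentiable ℝ (fun x => β x i j))
    (hanti : ∀ x, (om x)ᵀ = -(om x))
    (hβ0 : β x₀ = 1)
    (hdβ : ∀ (l i j : Fin (2 * n)), pder l (fun y => β y i j) x₀ = 0)
    (hJ : ∀ x, J x = om x * (β x)⁻¹)
    (hJ2 : ∀ x, J x * J x = -1) :
    ∀ (l : Fin (2 * n)) (v : Fin (2 * n) → ℝ),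
      ∑ j, ∑ m, pder l (fun y => J y j m) x₀ * v j * (∑ s, om x₀ m s * v s) = 0 := by
  intro l v
  have hωx₀ i j := (homdiff i j).differentiableAt (x := x₀)
  have hβx₀ i j := (hβdiff i j).differentiableAt (x := x₀)
  have hdet : (β x₀).det ≠ 0 := by simp [hβ0]
  have hJx₀ : ∀ i j, DifferentiableAt ℝ (fun y => J y i j) x₀ := by
    simpa only [hJ] using differentiableAt_mul_apply hωx₀ (differentiableAt_inv_apply hβx₀ hdet)
  have hJβ : (fun y => J y * β y) =ᶠ[nhds x₀] om := by
    filter_upwards [(differentiableAt_det hβx₀).continuousAt.eventually_ne hdet] with y hy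
    rw [hJ, nonsing_inv_mul_cancel_right _ _ (isUnit_iff_ne_zero.mpr hy)]
  set D := pderMatrix l om x₀
  have hJD : pderMatrix l J x₀ = D :=
    pderMatrix_eq_of_eventually_mul_eq l hJx₀ hβx₀ hJβ hβ0 (by ext i j; exact hdβ l i j)
  have hDanti : Dᵀ = -D := by
    rw [← pderMatrix_transpose, ← pderMatrix_neg]
    simp only [hanti]
  have hanticomm : D * om x₀ + om x₀ * D = 0 := by
    have h := pderMatrix_mul l hJx₀ hJx₀
    rwa [funext hJ2, pderMatrix_const, hJD, hJ, hβ0, inv_one, mul_one, eq_comm] at h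
  calc _ = v ⬝ᵥ (pderMatrix l J x₀ * om x₀) *ᵥ v := (dotProduct_mul_mulVec_eq_sum _ _ v).symm
    _ = 0 := by
      rw [hJD]
      exact dotProduct_mulVec_self_eq_zero
        (transpose_mul_eq_neg_of_anticommute hDanti (hanti x₀) hanticomm) v

/-- For `J = ω β⁻¹` with `J² = -1`, at a point where `β = δ` and `∂β = 0`,
one has `(∂_l J_j^m) v^j (ωv)_m = 0` for every direction `l` and vector `v`. -/
theorem stmt_4 (n : ℕ) (x₀ : Fin (2 * n) → ℝ)
    (om β J : (Fin (2 * n) → ℝ) → Matrix (Fin (2 * n)) (Fin (2 * n)) ℝ)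
    (homdiff : ∀ i j, Differentiable ℝ (fun x => om x i j))
    (hβdiff : ∀ i j, Differentiable ℝ (fun x => β x i j))
    (hanti : ∀ x, (om x)ᵀ = -(om x))
    (hclosed : ∀ x (l j k : Fin (2 * n)),
      pder l (fun y => om y j k) x + pder j (fun y => om y k l) x
        + pder k (fun y => om y l j) x = 0)
    (hβpos : ∀ x, (β x).PosDef)
    (hβ0 : β x₀ = 1)
    (hdβ : ∀ (l i j : Fin (2 * n)), pder l (fun y => β y i j) x₀ = 0)
    (hJ : ∀ x, J x = om x * (β x)⁻¹)
    (hJ2 : ∀ x, J x * J x = -1) :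
    ∀ (l : Fin (2 * n)) (v : Fin (2 * n) → ℝ),
      ∑ j, ∑ m, pder l (fun y => J y j m) x₀ * v j * (∑ s, om x₀ m s * v s) = 0 :=
  stmt_4_general n x₀ om β J homdiff hβdiff hanti hβ0 hdβ hJ hJ2
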